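/- With the unique elements ζₙ from the Zassenhaus factorization 1 + Σₙ xₙ = ⋯exp(ζ₂)exp(ζ₁) in the completed free graded ℚ-algebra on generators xₙ of degree n, one has for every n ≥ 1: xₙ = Σ_{λ ⊢ n} (1/m_λ) · ζ_{λ₁} ζ_{λ₂} ⋯ ζ_{λ_r}, where the sum is over all partitions λ = (λ₁ ≥ λ₂ ≥ ⋯ ≥ λ_r) of n, and m_λ = ∏_{i≥1} m_i(λ)! with m_i(λ) the multiplicity of i in λ. -/

import Mathlib

/- The completion of the free graded ℚ-algebra on generators `xₙ` of degree `n` is encoded as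
power series over `FreeAlgebra ℚ ℕ`, with the variable `t` recording the degree. -/

/-- The formal exponential `exp (c · tᵏ) = ∑ⱼ cʲ tᵏʲ / j!` (for `k ≥ 1`). -/
noncomputable def expPow {R : Type*} [Ring R] [Algebra ℚ R] (k : ℕ) (c : R) :
    PowerSeries R :=
  PowerSeries.mk fun m =>
    if k ∣ m then (algebraMap ℚ R (((m / k).factorial : ℚ)⁻¹)) * c ^ (m / k) else 0

/-- Ordered partial product `exp(ζ_N t^N) ⋯ exp(ζ₂ t²) exp(ζ₁ t)`. -/
noncomputable def zassDown {R : Type*} [Ring R] [Algebra ℚ R] (ζ : ℕ → R) (N : ℕ) :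
    PowerSeries R :=
  (((List.range N).reverse).map (fun k => expPow (k + 1) (ζ (k + 1)))).prod

/-- The series `1 + ∑_{n ≥ 1} xₙ tⁿ` over the free algebra on the `xₙ`. -/
noncomputable def genSeries : PowerSeries (FreeAlgebra ℚ ℕ) :=
  PowerSeries.mk fun n => if n = 0 then 1 else FreeAlgebra.ι ℚ n

/-- `m_λ = ∏ᵢ mᵢ(λ)!` where `mᵢ(λ)` is the multiplicity of `i` in `λ`. -/
def mPart {n : ℕ} (lam : Nat.Partition n) : ℕ :=
  ∏ i ∈ lam.parts.toFinset, (lam.parts.count i).factorial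

/-- The product `ζ_{λ₁} ζ_{λ₂} ⋯ ζ_{λ_r}` with parts in weakly decreasing order. -/
noncomputable def zetaProd {n : ℕ} (ζ : ℕ → FreeAlgebra ℚ ℕ) (lam : Nat.Partition n) :
    FreeAlgebra ℚ ℕ :=
  (((lam.parts.sort (· ≤ ·)).reverse).map ζ).prod

/-! Multiplying out `exp(ζ_N t^N) ⋯ exp(ζ₁ t)`, picking the term `ζ_kʲ tᵏʲ / j!` from each
factor `exp(ζ_k tᵏ)` is the same as picking a partition with `j` parts equal to `k`, and the chosen
`ζ`'s come in decreasing order of their indices. Hence the coefficient of `tⁿ` is `∑ ζ_λ / m_λ`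
over the partitions `λ ⊢ n` with parts at most `N`; formally this is an induction on `N` that
peels off the leftmost factor. Once `N ≥ n` every partition of `n` occurs, and comparing with
`1 + ∑ xₙ tⁿ` gives the formula. -/

open Finset PowerSeries
open scoped Nat

theorem Multiset.replicate_count_add_filter_ne (s : Multiset ℕ) (k : ℕ) :
    replicate (s.count k) k + s.filter (· ≠ k) = s := by
  rw [← filter_eq', filter_add_not]

theorem Multiset.mul_count_le_sum (s : Multiset ℕ) (k : ℕ) : k * s.count k ≤ s.sum := by
  have := congrArg sum (replicate_count_add_filter_ne s k)
  rw [sum_add, sum_replicate, smul_eq_mul] at this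
  lia

theorem mem_range_div_add_one_iff {n k j : ℕ} (hk : 0 < k) :
    j ∈ range (n / k + 1) ↔ k * j ≤ n := by
  rw [mem_range, Nat.lt_succ_iff, Nat.le_div_iff_mul_le hk, mul_comm]

namespace Nat.Partition

variable {n k j : ℕ}

theorem mem_restricted {p : ℕ → Prop} [DecidablePred p] {lam : n.Partition} :
    lam ∈ restricted n p ↔ ∀ i ∈ lam.parts, p i := by
  simp [restricted]

def addReplicate (hk : 0 < k) (hj : k * j ≤ n) (μ : (n - k * j).Partition) : n.Partition where
  parts := Multiset.replicate j k + μ.parts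
  parts_pos hp := by
    rcases Multiset.mem_add.1 hp with h | h
    · rwa [Multiset.eq_of_mem_replicate h]
    · exact μ.parts_pos h
  parts_sum := by
    rw [Multiset.sum_add, Multiset.sum_replicate, μ.parts_sum, smul_eq_mul]
    lia

theorem addReplicate_parts (hk : 0 < k) (hj : k * j ≤ n) (μ : (n - k * j).Partition) :
    (addReplicate hk hj μ).parts = Multiset.replicate j k + μ.parts := rfl

theorem addReplicate_injective (hk : 0 < k) (hj : k * j ≤ n) :
    Function.Injective (addReplicate hk hj) := fun _ _ h =>
  Partition.ext (add_left_cancel (congrArg parts h))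

theorem count_addReplicate (hk : 0 < k) (hj : k * j ≤ n) {μ : (n - k * j).Partition}
    (hμ : k ∉ μ.parts) : (addReplicate hk hj μ).parts.count k = j := by
  simp [addReplicate_parts, Multiset.count_eq_zero_of_notMem hμ]

theorem sum_restricted_filter_count_eq {M : Type*} [AddCommMonoid M] (N : ℕ) (hj : (N + 1) * j ≤ n)
    (F : n.Partition → M) :
    ∑ lam ∈ restricted n (· ≤ N + 1) with lam.parts.count (N + 1) = j, F lam =
      ∑ μ ∈ restricted (n - (N + 1) * j) (· ≤ N), F (addReplicate N.succ_pos hj μ) := by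
  symm
  refine sum_nbij (addReplicate N.succ_pos hj) (fun μ hμ => ?_)
    (addReplicate_injective _ hj).injOn (fun lam hlam => ?_) (fun _ _ => rfl)
  · rw [mem_restricted] at hμ
    rw [mem_filter, mem_restricted]
    refine ⟨fun p hp => ?_, count_addReplicate _ hj fun h => Nat.not_succ_le_self N (hμ _ h)⟩
    rcases Multiset.mem_add.1 hp with h | h
    · exact (Multiset.eq_of_mem_replicate h).le
    · exact (hμ p h).trans N.le_succ
  · obtain ⟨hle, rfl⟩ := (mem_filter.1 hlam).imp_left mem_restricted.1
    have hsplit := Multiset.replicate_count_add_filter_ne lam.parts (N + 1)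
    have hsum : (lam.parts.filter (· ≠ N + 1)).sum = n - (N + 1) * lam.parts.count (N + 1) := by
      have := congrArg Multiset.sum hsplit
      rw [Multiset.sum_add, Multiset.sum_replicate, smul_eq_mul, lam.parts_sum] at this
      lia
    refine ⟨⟨_, fun hp => lam.parts_pos (Multiset.mem_of_mem_filter hp), hsum⟩, ?_,
      Partition.ext hsplit⟩
    refine mem_restricted.2 fun p hp => ?_
    obtain ⟨hp, hpN⟩ := Multiset.mem_filter.1 hp
    exact Nat.le_of_lt_succ ((hle p hp).lt_of_ne hpN)

end Nat.Partition

section Weights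

open Nat.Partition

variable {n k j : ℕ}

theorem mPart_eq_prod_of_subset {lam : n.Partition} {s : Finset ℕ}
    (hs : lam.parts.toFinset ⊆ s) : mPart lam = ∏ i ∈ s, (lam.parts.count i)! :=
  prod_subset hs fun i _ hi => by
    rw [Multiset.count_eq_zero_of_notMem (by simpa using hi), Nat.factorial_zero]

theorem mPart_addReplicate (hk : 0 < k) (hj : k * j ≤ n) {μ : (n - k * j).Partition}
    (hμ : k ∉ μ.parts) : mPart (addReplicate hk hj μ) = j ! * mPart μ := by
  have hs : (addReplicate hk hj μ).parts.toFinset ⊆ insert k μ.parts.toFinset := by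
    intro i
    simp only [addReplicate_parts, Multiset.toFinset_add, Finset.mem_union, Finset.mem_insert,
      Multiset.mem_toFinset]
    exact Or.imp_left Multiset.eq_of_mem_replicate
  rw [mPart_eq_prod_of_subset hs, prod_insert (by simpa using hμ), count_addReplicate hk hj hμ,
    mPart]
  refine congrArg _ (prod_congr rfl fun i hi => ?_)
  have hik : i ≠ k := by rintro rfl; exact hμ (Multiset.mem_toFinset.1 hi)
  simp [addReplicate_parts, Multiset.count_replicate, hik.symm]

theorem sort_addReplicate (hk : 0 < k) (hj : k * j ≤ n) {μ : (n - k * j).Partition}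
    (hμ : ∀ p ∈ μ.parts, p ≤ k) :
    (addReplicate hk hj μ).parts.sort (· ≤ ·) = μ.parts.sort (· ≤ ·) ++ List.replicate j k := by
  refine List.Perm.eq_of_pairwise' (r := (· ≤ ·)) (Multiset.pairwise_sort _ _) ?_ ?_
  · rw [List.pairwise_append]
    refine ⟨Multiset.pairwise_sort _ _, List.pairwise_replicate.2 (Or.inr le_rfl), ?_⟩
    intro a ha b hb
    rw [List.eq_of_mem_replicate hb]
    exact hμ a ((Multiset.mem_sort _).1 ha)
  · rw [← Multiset.coe_eq_coe, Multiset.sort_eq, ← Multiset.coe_add, Multiset.sort_eq,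
      Multiset.coe_replicate, addReplicate_parts, add_comm]

theorem zetaProd_addReplicate (ζ : ℕ → FreeAlgebra ℚ ℕ) (hk : 0 < k) (hj : k * j ≤ n)
    {μ : (n - k * j).Partition} (hμ : ∀ p ∈ μ.parts, p ≤ k) :
    zetaProd ζ (addReplicate hk hj μ) = ζ k ^ j * zetaProd ζ μ := by
  rw [zetaProd, sort_addReplicate hk hj hμ, List.reverse_append, List.reverse_replicate,
    List.map_append, List.prod_append, List.map_replicate, List.prod_replicate, zetaProd]

noncomputable def zassTerm (ζ : ℕ → FreeAlgebra ℚ ℕ) (lam : n.Partition) : FreeAlgebra ℚ ℕ :=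
  algebraMap ℚ (FreeAlgebra ℚ ℕ) ((mPart lam : ℚ)⁻¹) * zetaProd ζ lam

theorem zassTerm_addReplicate (ζ : ℕ → FreeAlgebra ℚ ℕ) (hk : 0 < k) (hj : k * j ≤ n)
    {μ : (n - k * j).Partition} (hμ : ∀ p ∈ μ.parts, p < k) :
    zassTerm ζ (addReplicate hk hj μ) =
      algebraMap ℚ _ ((j ! : ℚ)⁻¹) * ζ k ^ j * zassTerm ζ μ := by
  rw [zassTerm, zassTerm, mPart_addReplicate hk hj fun h => (hμ k h).false,
    zetaProd_addReplicate ζ hk hj fun p hp => (hμ p hp).le, Nat.cast_mul, mul_inv, map_mul,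
    mul_assoc, mul_assoc, Algebra.left_comm (ζ k ^ j)]

end Weights

section ExpPow

variable {R : Type*} [Ring R] [Algebra ℚ R] {k : ℕ}

theorem coeff_expPow_mul_self (hk : 0 < k) (c : R) (j : ℕ) :
    coeff (k * j) (expPow k c) = algebraMap ℚ R ((j ! : ℚ)⁻¹) * c ^ j := by
  rw [expPow, coeff_mk, if_pos (dvd_mul_right k j), Nat.mul_div_cancel_left j hk]

theorem coeff_expPow_of_not_dvd {m : ℕ} (hm : ¬k ∣ m) (c : R) : coeff m (expPow k c) = 0 := by
  rw [expPow, coeff_mk, if_neg hm]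

theorem coeff_expPow_mul (hk : 0 < k) (c : R) (f : R⟦X⟧) (n : ℕ) :
    coeff n (expPow k c * f) =
      ∑ j ∈ range (n / k + 1), algebraMap ℚ R ((j ! : ℚ)⁻¹) * c ^ j * coeff (n - k * j) f := by
  set g : ℕ → ℕ × ℕ := fun j => (k * j, n - k * j)
  have hinj : Set.InjOn g (range (n / k + 1)) := fun a _ b _ h =>
    Nat.eq_of_mul_eq_mul_left hk (congrArg Prod.fst h)
  calc coeff n (expPow k c * f)
      = ∑ p ∈ antidiagonal n, coeff p.1 (expPow k c) * coeff p.2 f := coeff_mul _ _ _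
    _ = ∑ p ∈ (range (n / k + 1)).image g, coeff p.1 (expPow k c) * coeff p.2 f := by
      refine (sum_subset (fun p hp => ?_) fun p hp hpg => ?_).symm
      · obtain ⟨j, hj, rfl⟩ := mem_image.1 hp
        have := (mem_range_div_add_one_iff hk).1 hj
        rw [HasAntidiagonal.mem_antidiagonal]
        lia
      · rw [HasAntidiagonal.mem_antidiagonal] at hp
        suffices ¬k ∣ p.1 by rw [coeff_expPow_of_not_dvd this, zero_mul]
        rintro ⟨j, hj⟩
        refine hpg (mem_image.2 ⟨j, (mem_range_div_add_one_iff hk).2 (by lia), ?_⟩)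
        exact Prod.ext hj.symm (by simp only [g]; lia)
    _ = ∑ j ∈ range (n / k + 1), coeff (k * j) (expPow k c) * coeff (n - k * j) f :=
      sum_image hinj
    _ = _ := by simp_rw [coeff_expPow_mul_self hk]

theorem zassDown_succ (ζ : ℕ → R) (N : ℕ) :
    zassDown ζ (N + 1) = expPow (N + 1) (ζ (N + 1)) * zassDown ζ N := by
  simp [zassDown, List.range_succ]

end ExpPow

open Nat.Partition in
theorem coeff_zassDown (ζ : ℕ → FreeAlgebra ℚ ℕ) (N n : ℕ) :
    coeff n (zassDown ζ N) = ∑ lam ∈ restricted n (· ≤ N), zassTerm ζ lam := by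
  induction N generalizing n with
  | zero =>
    rw [zassDown, List.range_zero, List.reverse_nil, List.map_nil, List.prod_nil, coeff_one]
    rcases n.eq_zero_or_pos with rfl | hn
    · have huniv : restricted 0 (· ≤ 0) = univ :=
        eq_univ_of_forall fun lam => mem_restricted.2 fun i hi => by
          rw [partition_zero_parts] at hi; cases hi
      rw [if_pos rfl, huniv, univ_unique, sum_singleton]
      simp [zassTerm, mPart, zetaProd, partition_zero_parts]
    · have hempty : restricted n (· ≤ 0) = ∅ := by
        refine eq_empty_of_forall_notMem fun lam hlam => ?_
        obtain ⟨i, hi⟩ := Multiset.exists_mem_of_ne_zero (s := lam.parts) fun h => by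
          have := lam.parts_sum
          rw [h, Multiset.sum_zero] at this
          lia
        exact (lam.parts_pos hi).ne' (Nat.le_zero.1 (mem_restricted.1 hlam i hi))
      rw [if_neg hn.ne', hempty, sum_empty]
  | succ N ih =>
    have hcount (lam : n.Partition) (_ : lam ∈ restricted n (· ≤ N + 1)) :
        lam.parts.count (N + 1) ∈ range (n / (N + 1) + 1) := by
      rw [mem_range_div_add_one_iff N.succ_pos]
      exact (Multiset.mul_count_le_sum _ _).trans_eq lam.parts_sum
    rw [zassDown_succ, coeff_expPow_mul N.succ_pos, ← sum_fiberwise_of_maps_to hcount]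
    refine sum_congr rfl fun j hj => ?_
    have hjn := (mem_range_div_add_one_iff N.succ_pos).1 hj
    rw [ih, mul_sum, sum_restricted_filter_count_eq N hjn]
    refine sum_congr rfl fun μ hμ => ?_
    rw [zassTerm_addReplicate ζ N.succ_pos hjn fun p hp =>
      Nat.lt_succ_of_le (mem_restricted.1 hμ p hp), mul_assoc]

theorem stmt_2_general (ζ : ℕ → FreeAlgebra ℚ ℕ)
    (hfact : ∀ n N : ℕ, n ≤ N →
      PowerSeries.coeff n (zassDown ζ N) = PowerSeries.coeff n genSeries)
    (n : ℕ) (hn : 1 ≤ n) :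
    FreeAlgebra.ι ℚ n =
      ∑ lam : Nat.Partition n,
        algebraMap ℚ (FreeAlgebra ℚ ℕ) ((mPart lam : ℚ)⁻¹) * zetaProd ζ lam := by
  have hgen : coeff n genSeries = FreeAlgebra.ι ℚ n := by
    rw [genSeries, coeff_mk, if_neg (by lia)]
  have huniv : Nat.Partition.restricted n (· ≤ n) = univ :=
    eq_univ_of_forall fun lam => Nat.Partition.mem_restricted.2 fun _ => lam.le_of_mem_parts
  rw [← hgen, ← hfact n n le_rfl, coeff_zassDown, huniv]
  rfl

/-- If `(ζₙ)` is the Zassenhaus factorization of `1 + ∑ₙ xₙ`, then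
`xₙ = ∑_{λ ⊢ n} (1/m_λ) ζ_{λ₁} ⋯ ζ_{λ_r}`. -/
theorem stmt_2 (ζ : ℕ → FreeAlgebra ℚ ℕ) (hζ0 : ζ 0 = 0)
    (hfact : ∀ n N : ℕ, n ≤ N →
      PowerSeries.coeff n (zassDown ζ N) = PowerSeries.coeff n genSeries)
    (n : ℕ) (hn : 1 ≤ n) :
    FreeAlgebra.ι ℚ n =
      ∑ lam : Nat.Partition n,
        algebraMap ℚ (FreeAlgebra ℚ ℕ) ((mPart lam : ℚ)⁻¹) * zetaProd ζ lam :=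
  stmt_2_general ζ hfact n hn
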